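/- arXiv:1705.00434 — 3 statements merged into one kernel-verified Lean document; each statement's English description precedes it below -/
import Mathlib

section
/- Under the hypotheses guaranteeing the existence of the continuous function β : ℝⁿ → (0,∞) with ∑_{s∈Y} exp(−β(u)F(s) + u·c(s)) = 1, and assuming for every unit vector v there is s ∈ Y with v·c(s) > 0: for any sequence (u_m) in ℝⁿ, β(u_m) → ∞ if and only if ‖u_m‖ → ∞. -/
/-!
Each summand of `∑ s, exp (-β(u) F s + ⟪u, c s⟫) = 1` is at most `1` and the largest is at least
`1 / |Y|`, so `⟪u, c s⟫ ≤ β(u) F s` for every `s`, with `β(u) F s ≤ ⟪u, c s⟫ + log |Y|` for the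
largest summand. By compactness of the unit sphere the hypothesis on `c` gives `δ > 0`
with `max_s ⟪u, c s⟫ ≥ δ ‖u‖`, while `⟪u, c s⟫ ≤ ‖u‖ ‖c s‖`; hence `β(u)` and `‖u‖` are bounded
by affine functions of each other.
-/

open Real Filter
open scoped InnerProductSpace BigOperators

section SumExp

variable {Y : Type*} [Fintype Y] {x : Y → ℝ}

lemma le_zero_of_sum_exp_eq_one (h : ∑ s, exp (x s) = 1) (s : Y) : x s ≤ 0 := by
  have : exp (x s) ≤ 1 :=
    h ▸ Finset.single_le_sum (fun i _ => (exp_pos (x i)).le) (Finset.mem_univ s)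
  exact exp_le_one_iff.mp this

lemma exists_neg_log_card_le_of_sum_exp_eq_one (h : ∑ s, exp (x s) = 1) :
    ∃ s, -log (Fintype.card Y) ≤ x s := by
  have hne : (Finset.univ : Finset Y).Nonempty := by
    by_contra hY
    rw [Finset.not_nonempty_iff_eq_empty.mp hY, Finset.sum_empty] at h
    exact zero_ne_one h
  have hcard : (0 : ℝ) < Fintype.card Y := by
    exact_mod_cast Finset.card_pos.mpr hne
  have hsum : ∑ _s : Y, (Fintype.card Y : ℝ)⁻¹ ≤ ∑ s, exp (x s) := by
    rw [h, Finset.sum_const, Finset.card_univ, nsmul_eq_mul, mul_inv_cancel₀ hcard.ne']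
  obtain ⟨s, -, hs⟩ := Finset.exists_le_of_sum_le hne hsum
  refine ⟨s, ?_⟩
  rw [← log_inv, ← log_exp (x s)]
  exact log_le_log (inv_pos.mpr hcard) hs

end SumExp

lemma exists_pos_mul_norm_le_inner {E Y : Type*} [NormedAddCommGroup E] [InnerProductSpace ℝ E]
    [ProperSpace E] [Fintype Y] [Nonempty Y] {c : Y → E}
    (hc : ∀ v : E, ‖v‖ = 1 → ∃ s, 0 < ⟪v, c s⟫_ℝ) :
    ∃ δ > 0, ∀ w : E, ∃ s, δ * ‖w‖ ≤ ⟪w, c s⟫_ℝ := by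
  have hne : (Finset.univ : Finset Y).Nonempty := Finset.univ_nonempty
  let f : E → ℝ := fun v => Finset.univ.sup' hne fun s => ⟪v, c s⟫_ℝ
  have hf : Continuous f :=
    Continuous.finset_sup'_apply hne fun s _ => continuous_id.inner continuous_const
  have hf_pos : ∀ v ∈ Metric.sphere (0 : E) 1, 0 < f v := by
    intro v hv
    obtain ⟨s, hs⟩ := hc v (by simpa using hv)
    exact hs.trans_le (Finset.le_sup' (fun s => ⟪v, c s⟫_ℝ) (Finset.mem_univ s))
  obtain ⟨δ, hδ, hδf⟩ := (isCompact_sphere (0 : E) 1).exists_forall_le' hf.continuousOn hf_pos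
  refine ⟨δ, hδ, fun w => ?_⟩
  rcases eq_or_ne w 0 with rfl | hw
  · exact ⟨Classical.arbitrary Y, by simp⟩
  have hw' : 0 < ‖w‖ := norm_pos_iff.mpr hw
  obtain ⟨s, -, hs⟩ := Finset.exists_mem_eq_sup' hne fun s => ⟪‖w‖⁻¹ • w, c s⟫_ℝ
  have hδs : δ ≤ ‖w‖⁻¹ * ⟪w, c s⟫_ℝ := by
    rw [← real_inner_smul_left, ← hs]
    exact hδf _ (by simp [norm_smul, hw'.ne'])
  exact ⟨s, by rwa [le_inv_mul_iff₀ hw', mul_comm] at hδs⟩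

lemma Filter.tendsto_atTop_of_mul_le_mul_add {ι : Type*} {l : Filter ι} {f g : ι → ℝ}
    {a b d : ℝ} (ha : 0 < a) (hb : 0 < b) (h : ∀ i, a * f i ≤ b * g i + d)
    (hf : Tendsto f l atTop) : Tendsto g l atTop := by
  have hgd : Tendsto (fun i => b * g i + d) l atTop :=
    tendsto_atTop_mono h ((tendsto_const_mul_atTop_of_pos ha).mpr hf)
  refine (tendsto_const_mul_atTop_of_pos hb).mp ?_
  simpa using tendsto_atTop_add_const_right l (-d) hgd

theorem stmt3_general (n : ℕ) (Y : Type*) [Fintype Y]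
    (F : Y → ℝ) (hF : ∀ s, 0 < F s) (c : Y → EuclideanSpace ℝ (Fin n))
    (hc : ∀ v : EuclideanSpace ℝ (Fin n), ‖v‖ = 1 → ∃ s, 0 < ⟪v, c s⟫_ℝ)
    (B : EuclideanSpace ℝ (Fin n) → ℝ)
    (hB : ∀ u, 0 < B u ∧ ∑ s, Real.exp (-(B u * F s) + ⟪u, c s⟫_ℝ) = 1) :
    ∀ u : ℕ → EuclideanSpace ℝ (Fin n),
      Filter.Tendsto (fun m => B (u m)) Filter.atTop Filter.atTop ↔
      Filter.Tendsto (fun m => ‖u m‖) Filter.atTop Filter.atTop := by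
  have hinner_le : ∀ w s, ⟪w, c s⟫_ℝ ≤ B w * F s := fun w s => by
    linarith [le_zero_of_sum_exp_eq_one (hB w).2 s]
  have hexists_le : ∀ w, ∃ s, B w * F s ≤ ⟪w, c s⟫_ℝ + log (Fintype.card Y) := fun w => by
    obtain ⟨s, hs⟩ := exists_neg_log_card_le_of_sum_exp_eq_one (hB w).2
    exact ⟨s, by linarith⟩
  have : Nonempty Y := ⟨(hexists_le 0).choose⟩
  obtain ⟨δ, hδ, hδc⟩ := exists_pos_mul_norm_le_inner hc
  obtain ⟨sF, hsF⟩ := Finite.exists_max F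
  obtain ⟨sf, hsf⟩ := Finite.exists_min F
  obtain ⟨sc, hsc⟩ := Finite.exists_max fun s => ‖c s‖
  intro u
  refine ⟨tendsto_atTop_of_mul_le_mul_add (hF sf) (by positivity : 0 < ‖c sc‖ + 1)
    (d := log (Fintype.card Y)) fun m => ?_,
    tendsto_atTop_of_mul_le_mul_add hδ (hF sF) (d := 0) fun m => ?_⟩
  · obtain ⟨s, hs⟩ := hexists_le (u m)
    have hBF : F sf * B (u m) ≤ B (u m) * F s := by
      nlinarith [hsf s, (hB (u m)).1]
    have hcs : ‖u m‖ * ‖c s‖ ≤ (‖c sc‖ + 1) * ‖u m‖ := by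
      nlinarith [hsc s, norm_nonneg (u m)]
    linarith [real_inner_le_norm (u m) (c s)]
  · obtain ⟨s, hs⟩ := hδc (u m)
    nlinarith [hinner_le (u m) s, hsF s, (hB (u m)).1]

theorem stmt3 (n : ℕ) (hn : 0 < n) (Y : Type*) [Fintype Y] (hY : 2 ≤ Fintype.card Y)
    (F : Y → ℝ) (hF : ∀ s, 0 < F s) (c : Y → EuclideanSpace ℝ (Fin n))
    (hc : ∀ v : EuclideanSpace ℝ (Fin n), ‖v‖ = 1 → ∃ s, 0 < ⟪v, c s⟫_ℝ)
    (B : EuclideanSpace ℝ (Fin n) → ℝ)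
    (hB : ∀ u, 0 < B u ∧ ∑ s, Real.exp (-(B u * F s) + ⟪u, c s⟫_ℝ) = 1) :
    ∀ u : ℕ → EuclideanSpace ℝ (Fin n),
      Filter.Tendsto (fun m => B (u m)) Filter.atTop Filter.atTop ↔
      Filter.Tendsto (fun m => ‖u m‖) Filter.atTop Filter.atTop :=
  stmt3_general n Y F hF c hc B hB
end

section
/- Let Y be a finite set, F : Y → ℝ strictly positive, c : Y → ℝⁿ with the property that for every unit vector v there is s ∈ Y with v·c(s) > 0, and for β ∈ ℝ let u(β) be the unique minimizer of u ↦ ∑_{s∈Y} exp(u·c(s) − βF(s)). Then the map β ↦ u(β) is continuous. -/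
/-!
The objective `u ↦ ∑ₛ exp (⟪u, c s⟫ - β F s)` is jointly continuous in `(β, u)`, so a cluster point
of `U` at `β₀` still minimizes the objective at `β₀` and hence equals `U β₀` by uniqueness. Such
cluster points exist because `U` is locally bounded: by compactness of the unit sphere the
hypothesis on `c` holds uniformly, `ε ≤ max_s ⟪v, c s⟫` for unit `v`, and then comparing the value
at `U β` with the value at `0` bounds `ε ‖U β‖` by a continuous function of `β`.
-/

open Real Filter Topology Finset
open scoped InnerProductSpace

theorem Filter.Tendsto.mapClusterPt_prodMk {ι X Y : Type*} [TopologicalSpace X]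
    [TopologicalSpace Y] {l : Filter ι} {g : ι → X} {f : ι → Y} {x : X} {y : Y}
    (hg : Tendsto g l (𝓝 x)) (hf : MapClusterPt y l f) :
    MapClusterPt (x, y) l fun i => (g i, f i) := by
  rw [((𝓝 x).basis_sets.prod_nhds (𝓝 y).basis_sets).mapClusterPt_iff_frequently]
  rintro ⟨s, t⟩ ⟨hs, ht⟩
  exact ((mapClusterPt_iff_frequently.1 hf t ht).and_eventually (hg hs)).mono fun _ h => ⟨h.2, h.1⟩

theorem apply_le_of_forall_ne_lt {E α : Type*} [Preorder α] {g : E → α} {m : E}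
    (h : ∀ u, u ≠ m → g m < g u) (u : E) : g m ≤ g u := by
  rcases eq_or_ne u m with rfl | hu
  · exact le_rfl
  · exact (h u hu).le

theorem continuous_of_unique_minimizer {X E α : Type*} [TopologicalSpace X] [TopologicalSpace E]
    [LinearOrder α] [TopologicalSpace α] [OrderClosedTopology α] {f : X → E → α}
    (hf : Continuous (Function.uncurry f)) {U : X → E} (hU : ∀ x u, u ≠ U x → f x (U x) < f x u)
    (hK : ∀ x, ∃ K, IsCompact K ∧ ∀ᶠ y in 𝓝 x, U y ∈ K) : Continuous U := by
  refine continuous_iff_continuousAt.2 fun x => ?_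
  obtain ⟨K, hK, hUK⟩ := hK x
  refine hK.tendsto_nhds_of_unique_mapClusterPt hUK fun a _ ha => ?_
  have hgraph : MapClusterPt (x, a) (𝓝 x) fun y => (y, U y) := tendsto_id.mapClusterPt_prodMk ha
  have hmin : ∀ u, f x a ≤ f x u := fun u =>
    (isClosed_le hf (hf.comp (continuous_fst.prodMk continuous_const))).mem_of_mapClusterPt hgraph
      (Eventually.of_forall fun y => apply_le_of_forall_ne_lt (hU y) u)
  by_contra h
  exact (hU x a h).not_ge (hmin _)

section ExpSum

variable {Y E : Type*} [Fintype Y] [NormedAddCommGroup E] [InnerProductSpace ℝ E]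

theorem exists_pos_le_inner_of_norm_eq_one [FiniteDimensional ℝ E] {c : Y → E}
    (hc : ∀ v : E, ‖v‖ = 1 → ∃ s, 0 < ⟪v, c s⟫_ℝ) :
    ∃ ε > 0, ∀ v : E, ‖v‖ = 1 → ∃ s, ε ≤ ⟪v, c s⟫_ℝ := by
  rcases isEmpty_or_nonempty Y with _ | _
  · exact ⟨1, one_pos, fun v hv => (hc v hv).elim fun s _ => isEmptyElim s⟩
  set g : E → ℝ := fun v => univ.sup' univ_nonempty fun s => ⟪v, c s⟫_ℝ
  have hg : Continuous g :=
    Continuous.finset_sup'_apply _ fun s _ => continuous_id.inner continuous_const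
  obtain ⟨ε, hε, hεg⟩ := (isCompact_sphere (0 : E) 1).exists_forall_le' hg.continuousOn
    (a := 0) fun v hv => by
      obtain ⟨s, hs⟩ := hc v (by simpa using hv)
      exact hs.trans_le (le_sup' (fun s => ⟪v, c s⟫_ℝ) (mem_univ s))
  refine ⟨ε, hε, fun v hv => ?_⟩
  obtain ⟨s, -, hs⟩ := exists_mem_eq_sup' univ_nonempty fun s => ⟪v, c s⟫_ℝ
  exact ⟨s, hs ▸ hεg v (by simpa using hv)⟩

noncomputable def expSum (c : Y → E) (F : Y → ℝ) (β : ℝ) (u : E) : ℝ :=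
  ∑ s, exp (⟪u, c s⟫_ℝ - β * F s)

theorem continuous_uncurry_expSum (c : Y → E) (F : Y → ℝ) :
    Continuous (Function.uncurry (expSum c F)) := by
  unfold expSum Function.uncurry
  fun_prop

theorem mul_norm_le_expSum_mul {c : Y → E} (F : Y → ℝ) {ε : ℝ}
    (hε : ∀ v : E, ‖v‖ = 1 → ∃ s, ε ≤ ⟪v, c s⟫_ℝ) (β : ℝ) (u : E) :
    ε * ‖u‖ ≤ expSum c F β u * ∑ s, exp (β * F s) := by
  rcases eq_or_ne u 0 with rfl | hu
  · rw [norm_zero, mul_zero]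
    unfold expSum
    positivity
  obtain ⟨s, hs⟩ := hε (‖u‖⁻¹ • u) (by simpa using norm_smul_inv_norm (𝕜 := ℝ) hu)
  rw [real_inner_smul_left, le_inv_mul_iff₀' (norm_pos_iff.2 hu)] at hs
  calc ε * ‖u‖ ≤ ⟪u, c s⟫_ℝ := hs
    _ ≤ exp ⟪u, c s⟫_ℝ := by linarith [add_one_le_exp ⟪u, c s⟫_ℝ]
    _ = exp (⟪u, c s⟫_ℝ - β * F s) * exp (β * F s) := by rw [← exp_add, sub_add_cancel]
    _ ≤ expSum c F β u * ∑ s, exp (β * F s) := by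
      refine mul_le_mul ?_ ?_ (exp_pos _).le (by unfold expSum; positivity)
      · exact single_le_sum (f := fun s => exp (⟪u, c s⟫_ℝ - β * F s))
          (fun _ _ => (exp_pos _).le) (mem_univ s)
      · exact single_le_sum (f := fun s => exp (β * F s)) (fun _ _ => (exp_pos _).le) (mem_univ s)

end ExpSum

theorem stmt4_general (n : ℕ) (Y : Type*) [Fintype Y]
    (F : Y → ℝ) (c : Y → EuclideanSpace ℝ (Fin n))
    (hc : ∀ v : EuclideanSpace ℝ (Fin n), ‖v‖ = 1 → ∃ s, 0 < ⟪v, c s⟫_ℝ)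
    (U : ℝ → EuclideanSpace ℝ (Fin n))
    (hU : ∀ β : ℝ, ∀ u, u ≠ U β →
      ∑ s, Real.exp (⟪U β, c s⟫_ℝ - β * F s) < ∑ s, Real.exp (⟪u, c s⟫_ℝ - β * F s)) :
    Continuous U := by
  obtain ⟨ε, hε, hcε⟩ := exists_pos_le_inner_of_norm_eq_one hc
  set R : ℝ → ℝ := fun β => expSum c F β 0 * (∑ s, exp (β * F s)) / ε
  have hR : Continuous R := by unfold R expSum; fun_prop
  have hUR : ∀ β, ‖U β‖ ≤ R β := fun β => by
    rw [le_div_iff₀' hε]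
    refine (mul_norm_le_expSum_mul F hcε β (U β)).trans ?_
    gcongr
    exact apply_le_of_forall_ne_lt (g := expSum c F β) (hU β) 0
  refine continuous_of_unique_minimizer (continuous_uncurry_expSum c F) hU fun β =>
    ⟨Metric.closedBall 0 (R β + 1), isCompact_closedBall _ _, ?_⟩
  filter_upwards [hR.continuousAt.eventually_lt continuousAt_const (lt_add_one (R β))] with β' hβ'
  exact mem_closedBall_zero_iff.2 ((hUR β').trans hβ'.le)

theorem stmt4 (n : ℕ) (hn : 0 < n) (Y : Type*) [Fintype Y] (hY : 2 ≤ Fintype.card Y)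
    (F : Y → ℝ) (hF : ∀ s, 0 < F s) (c : Y → EuclideanSpace ℝ (Fin n))
    (hc : ∀ v : EuclideanSpace ℝ (Fin n), ‖v‖ = 1 → ∃ s, 0 < ⟪v, c s⟫_ℝ)
    (U : ℝ → EuclideanSpace ℝ (Fin n))
    (hU : ∀ β : ℝ, ∀ u, u ≠ U β →
      ∑ s, Real.exp (⟪U β, c s⟫_ℝ - β * F s) < ∑ s, Real.exp (⟪u, c s⟫_ℝ - β * F s)) :
    Continuous U :=
  stmt4_general n Y F c hc U hU
end

section
/- Let Y be a finite set, F : Y → ℝ strictly positive, c : Y → ℝⁿ with the property that for every unit vector v there is s ∈ Y with v·c(s) > 0, and let u(β) denote the unique minimizer of u ↦ ∑_{s∈Y} exp(u·c(s) − βF(s)). Define g(β) = ∑_{s∈Y} exp(−βF(s) + u(β)·c(s)). Then there exists β₀ > 0 such that g(β) > 1 for β < β₀, g(β₀) = 1, and g(β) < 1 for β > β₀. -/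
/-!
The minimum value `g β = min_u ∑ₛ exp (⟪u, c s⟫ - β F s)` is strictly decreasing in `β` because
every `F s` is positive, and continuous because moving `β` by `δ` changes each term by a factor
at most `exp (M |δ|)` with `M = maxₛ |F s|`. At `β = 0` it exceeds `1`: otherwise
`⟪U 0, c s⟫ ≤ 0` for all `s`, and then `2 • U 0` would do at least as well as the strict
minimizer `U 0`. For large `β` already `u = 0` gives a value below `1`. The intermediate value
theorem produces the unique crossing `β₀`.
-/

open Real Filter Topology
open scoped InnerProductSpace

theorem continuous_of_le_exp_mul_abs_sub {f : ℝ → ℝ} {M : ℝ}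
    (h : ∀ x y, f y ≤ exp (M * |y - x|) * f x) : Continuous f := by
  refine continuous_iff_continuousAt.2 fun x => ?_
  have lower : Tendsto (fun y => exp (-(M * |y - x|)) * f x) (𝓝 x) (𝓝 (f x)) := by
    simpa using (by fun_prop : Continuous fun y => exp (-(M * |y - x|)) * f x).tendsto x
  have upper : Tendsto (fun y => exp (M * |y - x|) * f x) (𝓝 x) (𝓝 (f x)) := by
    simpa using (by fun_prop : Continuous fun y => exp (M * |y - x|) * f x).tendsto x
  refine tendsto_of_tendsto_of_tendsto_of_le_of_le lower upper (fun y => ?_) (h x)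
  have hyx := h y x
  rw [abs_sub_comm] at hyx
  rwa [exp_neg, inv_mul_le_iff₀ (exp_pos _)]

theorem StrictAnti.exists_pos_eq_one {g : ℝ → ℝ} (hanti : StrictAnti g) (hcont : Continuous g)
    (h0 : 1 < g 0) {B : ℝ} (hB : g B < 1) :
    ∃ β₀, 0 < β₀ ∧ g β₀ = 1 ∧ (∀ β, β < β₀ → 1 < g β) ∧ ∀ β, β₀ < β → g β < 1 := by
  have hB0 : 0 ≤ B := (hanti.lt_iff_gt.1 (hB.trans h0)).le
  obtain ⟨β₀, hβ₀, hg⟩ := intermediate_value_Icc' hB0 hcont.continuousOn ⟨hB.le, h0.le⟩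
  refine ⟨β₀, hβ₀.1.lt_of_ne ?_, hg, fun β hβ => hg ▸ hanti hβ, fun β hβ => hg ▸ hanti hβ⟩
  rintro rfl
  exact h0.ne' hg

section PartitionFn

variable {Y E : Type*} [Fintype Y] [NormedAddCommGroup E] [InnerProductSpace ℝ E]
  (F : Y → ℝ) (c : Y → E)

noncomputable def partitionFn (β : ℝ) (u : E) : ℝ :=
  ∑ s, exp (⟪u, c s⟫_ℝ - β * F s)

variable {F c}

theorem partitionFn_strictAnti [Nonempty Y] (hF : ∀ s, 0 < F s) (u : E) :
    StrictAnti fun β => partitionFn F c β u := fun β β' h =>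
  Finset.sum_lt_sum_of_nonempty Finset.univ_nonempty fun s _ =>
    exp_lt_exp.2 (by nlinarith [hF s])

theorem partitionFn_le_exp_mul {M : ℝ} (hM : ∀ s, |F s| ≤ M) (β β' : ℝ) (u : E) :
    partitionFn F c β' u ≤ exp (M * |β' - β|) * partitionFn F c β u := by
  rw [partitionFn, partitionFn, Finset.mul_sum]
  refine Finset.sum_le_sum fun s _ => ?_
  rw [← exp_add, exp_le_exp]
  have : (β - β') * F s ≤ M * |β' - β| := by
    calc (β - β') * F s ≤ |(β - β') * F s| := le_abs_self _
      _ = |β' - β| * |F s| := by rw [abs_mul, abs_sub_comm]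
      _ ≤ M * |β' - β| := by rw [mul_comm]; gcongr; exact hM s
  linarith

theorem tendsto_partitionFn_zero_atTop (hF : ∀ s, 0 < F s) :
    Tendsto (fun β => partitionFn F c β 0) atTop (𝓝 0) := by
  have hterm : ∀ s, Tendsto (fun β => exp (-(β * F s))) atTop (𝓝 0) := fun s =>
    tendsto_exp_atBot.comp <| tendsto_neg_atTop_atBot.comp <| tendsto_id.atTop_mul_const (hF s)
  simpa [partitionFn] using tendsto_finsetSum Finset.univ fun s _ => hterm s

theorem one_lt_partitionFn_zero (hY : 2 ≤ Fintype.card Y) {u₀ : E}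
    (hmin : ∀ u, u ≠ u₀ → partitionFn F c 0 u₀ < partitionFn F c 0 u) :
    1 < partitionFn F c 0 u₀ := by
  by_cases hpos : ∃ s, 0 < ⟪u₀, c s⟫_ℝ
  · obtain ⟨s, hs⟩ := hpos
    calc 1 < exp (⟪u₀, c s⟫_ℝ - 0 * F s) := by simpa using hs
      _ ≤ partitionFn F c 0 u₀ :=
        Finset.single_le_sum (f := fun t => exp (⟪u₀, c t⟫_ℝ - 0 * F t))
          (fun t _ => (exp_pos _).le) (Finset.mem_univ s)
  by_cases hu₀ : u₀ = 0
  · subst hu₀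
    simp only [partitionFn, inner_zero_left, zero_mul, sub_zero, exp_zero, Finset.sum_const,
      Finset.card_univ, nsmul_eq_mul, mul_one]
    exact_mod_cast hY
  push Not at hpos
  have hdouble : partitionFn F c 0 ((2 : ℝ) • u₀) ≤ partitionFn F c 0 u₀ :=
    Finset.sum_le_sum fun s _ => by
      rw [real_inner_smul_left, exp_le_exp]
      linarith [hpos s]
  refine absurd (hmin _ ?_) hdouble.not_gt
  rw [Ne, two_smul, add_eq_right]
  exact hu₀

variable {U : ℝ → E} (hU : ∀ β u, partitionFn F c β (U β) ≤ partitionFn F c β u)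
include hU

theorem strictAnti_partitionFn_min [Nonempty Y] (hF : ∀ s, 0 < F s) :
    StrictAnti fun β => partitionFn F c β (U β) := fun β β' h =>
  (hU β' (U β)).trans_lt (partitionFn_strictAnti hF (U β) h)

theorem continuous_partitionFn_min : Continuous fun β => partitionFn F c β (U β) := by
  obtain ⟨M, hM⟩ := Finite.exists_le fun s => |F s|
  exact continuous_of_le_exp_mul_abs_sub fun β β' =>
    (hU β' (U β)).trans (partitionFn_le_exp_mul hM β β' (U β))

theorem exists_partitionFn_min_lt_one (hF : ∀ s, 0 < F s) :
    ∃ B, partitionFn F c B (U B) < 1 := by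
  obtain ⟨B, hB⟩ := ((tendsto_order.1 (tendsto_partitionFn_zero_atTop (c := c) hF)).2 1
    one_pos).exists
  exact ⟨B, (hU B 0).trans_lt hB⟩

end PartitionFn

theorem stmt5_general (n : ℕ) (Y : Type*) [Fintype Y] (hY : 2 ≤ Fintype.card Y)
    (F : Y → ℝ) (hF : ∀ s, 0 < F s) (c : Y → EuclideanSpace ℝ (Fin n))
    (U : ℝ → EuclideanSpace ℝ (Fin n))
    (hU : ∀ β : ℝ, ∀ u, u ≠ U β →
      ∑ s, Real.exp (⟪U β, c s⟫_ℝ - β * F s) < ∑ s, Real.exp (⟪u, c s⟫_ℝ - β * F s)) :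
    ∃ β₀ : ℝ, 0 < β₀ ∧
      (∑ s, Real.exp (-(β₀ * F s) + ⟪U β₀, c s⟫_ℝ) = 1) ∧
      (∀ β : ℝ, β < β₀ → 1 < ∑ s, Real.exp (-(β * F s) + ⟪U β, c s⟫_ℝ)) ∧
      (∀ β : ℝ, β₀ < β → ∑ s, Real.exp (-(β * F s) + ⟪U β, c s⟫_ℝ) < 1) := by
  have : Nonempty Y := Fintype.card_pos_iff.mp (by omega)
  have hmin : ∀ β u, partitionFn F c β (U β) ≤ partitionFn F c β u := fun β u =>
    (eq_or_ne u (U β)).elim (fun h => h ▸ le_rfl) fun h => (hU β u h).le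
  obtain ⟨B, hB⟩ := exists_partitionFn_min_lt_one hmin hF
  simp only [neg_add_eq_sub]
  exact (strictAnti_partitionFn_min hmin hF).exists_pos_eq_one (continuous_partitionFn_min hmin)
    (one_lt_partitionFn_zero hY (hU 0)) hB

theorem stmt5 (n : ℕ) (hn : 0 < n) (Y : Type*) [Fintype Y] (hY : 2 ≤ Fintype.card Y)
    (F : Y → ℝ) (hF : ∀ s, 0 < F s) (c : Y → EuclideanSpace ℝ (Fin n))
    (hc : ∀ v : EuclideanSpace ℝ (Fin n), ‖v‖ = 1 → ∃ s, 0 < ⟪v, c s⟫_ℝ)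
    (U : ℝ → EuclideanSpace ℝ (Fin n))
    (hU : ∀ β : ℝ, ∀ u, u ≠ U β →
      ∑ s, Real.exp (⟪U β, c s⟫_ℝ - β * F s) < ∑ s, Real.exp (⟪u, c s⟫_ℝ - β * F s)) :
    ∃ β₀ : ℝ, 0 < β₀ ∧
      (∑ s, Real.exp (-(β₀ * F s) + ⟪U β₀, c s⟫_ℝ) = 1) ∧
      (∀ β : ℝ, β < β₀ → 1 < ∑ s, Real.exp (-(β * F s) + ⟪U β, c s⟫_ℝ)) ∧
      (∀ β : ℝ, β₀ < β → ∑ s, Real.exp (-(β * F s) + ⟪U β, c s⟫_ℝ) < 1) :=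
  stmt5_general n Y hY F hF c U hU
end
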